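/- arXiv:1305.5329 — 3 statements merged into one kernel-verified Lean document; each statement's English description precedes it below -/
import Mathlib

section
/- Let A be a unital (not necessarily commutative) ring, a, b ∈ A, s₀ = 1 − b·a, s₁ = 1 − a·b, L = [[s₀, −(1+s₀)·b],[a, s₁]] ∈ M₂(A) with inverse L⁻¹ = [[s₀, (1+s₀)·b],[−a, s₁]], and let E₁₁ = [[1,0],[0,0]] and E₂₂ = [[0,0],[0,1]]. Then P := L·E₁₁·L⁻¹ is an idempotent (P² = P) and the residue matrix R := P − E₂₂ is given explicitly by R = [[s₀², s₀(1+s₀)·b],[s₁·a, −s₁²]]. -/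
/-! Expanding with `b a = 1 - s₀` and `a b = 1 - s₁` shows that `L⁻¹` is a left inverse of `L`.
A product `u e v` with `v u = 1` and `e` idempotent is idempotent, so `P = L E₁₁ L⁻¹` is;
and `P` is the first column of `L` times the first row of `L⁻¹`, from which `R` is read off. -/

theorem IsIdempotentElem.mul_mul_of_mul_eq_one {M : Type*} [Monoid M] {e u v : M}
    (he : IsIdempotentElem e) (hvu : v * u = 1) : IsIdempotentElem (u * e * v) :=
  calc u * e * v * (u * e * v) = u * (e * (v * u) * e) * v := by simp only [mul_assoc]
    _ = u * e * v := by rw [hvu, mul_one, he.eq, mul_assoc]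

namespace ConnesMoscovici

variable {A : Type*} [Ring A] {a b s₀ s₁ : A}

lemma inv_mul_self (hs₀ : s₀ = 1 - b * a) (hs₁ : s₁ = 1 - a * b) :
    !![s₀, (1 + s₀) * b; -a, s₁] * !![s₀, -((1 + s₀) * b); a, s₁] = 1 := by
  subst hs₀ hs₁
  rw [Matrix.mul_fin_two, Matrix.one_fin_two]
  simp only [EmbeddingLike.apply_eq_iff_eq, Matrix.vecCons_inj, and_true]
  and_intros <;> noncomm_ring

lemma mul_E₁₁_mul_inv (hs₀ : s₀ = 1 - b * a) (hs₁ : s₁ = 1 - a * b) :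
    !![s₀, -((1 + s₀) * b); a, s₁] * !![1, 0; 0, 0] * !![s₀, (1 + s₀) * b; -a, s₁] =
      !![s₀ ^ 2, s₀ * (1 + s₀) * b; s₁ * a, 1 - s₁ ^ 2] := by
  subst hs₀ hs₁
  rw [Matrix.mul_fin_two, Matrix.mul_fin_two]
  simp only [EmbeddingLike.apply_eq_iff_eq, Matrix.vecCons_inj, and_true]
  and_intros <;> noncomm_ring

end ConnesMoscovici

/-- The Connes–Moscovici idempotent `P = L·E₁₁·L⁻¹` and residue matrix
`R = P − E₂₂`: with `s₀ = 1 − b·a`, `s₁ = 1 − a·b`,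
`L = [[s₀, −(1+s₀)·b],[a, s₁]]`, `L⁻¹ = [[s₀, (1+s₀)·b],[−a, s₁]]`,
`E₁₁ = [[1,0],[0,0]]` and `E₂₂ = [[0,0],[0,1]]`, the matrix `P := L·E₁₁·L⁻¹`
is an idempotent and `R := P − E₂₂ = [[s₀², s₀(1+s₀)·b],[s₁·a, −s₁²]]`. -/
theorem connesMoscovici_idempotent_and_residue
    {A : Type*} [Ring A] (a b s₀ s₁ : A)
    (hs₀ : s₀ = 1 - b * a) (hs₁ : s₁ = 1 - a * b)
    (L Linv E₁₁ E₂₂ P R : Matrix (Fin 2) (Fin 2) A)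
    (hL : L = !![s₀, -((1 + s₀) * b); a, s₁])
    (hLinv : Linv = !![s₀, (1 + s₀) * b; -a, s₁])
    (hE₁₁ : E₁₁ = !![1, 0; 0, 0])
    (hE₂₂ : E₂₂ = !![0, 0; 0, 1])
    (hP : P = L * E₁₁ * Linv)
    (hR : R = P - E₂₂) :
    P * P = P ∧ R = !![s₀ ^ 2, s₀ * (1 + s₀) * b; s₁ * a, -s₁ ^ 2] := by
  subst hL hLinv hE₁₁ hE₂₂ hP hR
  have hE₁₁ : IsIdempotentElem !![(1 : A), 0; 0, 0] := by
    rw [IsIdempotentElem, Matrix.mul_fin_two]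
    simp
  refine ⟨(hE₁₁.mul_mul_of_mul_eq_one (ConnesMoscovici.inv_mul_self hs₀ hs₁)).eq, ?_⟩
  rw [ConnesMoscovici.mul_E₁₁_mul_inv hs₀ hs₁]
  simp
end

section
/- Let 𝕜 be a field, let V and W be finite-dimensional 𝕜-vector spaces, and let a : V → W and b : W → V be linear maps. Set s₀ = id_V − b∘a and s₁ = id_W − a∘b. Then trace(s₀²) − trace(s₁²) = (dim ker a − dim (W / range a)) · 1_𝕜, i.e. the difference of the traces of the squared remainders equals the Fredholm index of a. -/
/-!
Expanding the squares, `trace (1 - b a)² - trace (1 - a b)²` becomes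
`(dim V - dim W) - 2 (tr (b a) - tr (a b)) + (tr (b a b a) - tr (a b a b))`, and the two
bracketed differences vanish because the trace is invariant under cyclic permutations.
What is left, `dim V - dim W`, is the index of `a` by rank–nullity.
-/

namespace LinearMap

open Module

variable {R M N : Type*} [CommRing R]
  [AddCommGroup M] [Module R M] [Module.Free R M] [Module.Finite R M]
  [AddCommGroup N] [Module R N] [Module.Free R N] [Module.Finite R N]

lemma trace_id_sub_comp_id_sub (f : M →ₗ[R] M) :
    trace R M ((id - f) ∘ₗ (id - f)) = finrank R M - 2 * trace R M f + trace R M (f ∘ₗ f) := by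
  have hsq : (id - f) ∘ₗ (id - f) = id - f - f + f ∘ₗ f := by
    rw [sub_comp, comp_sub, comp_sub, id_comp, comp_id, id_comp]
    abel
  rw [hsq, map_add, map_sub, map_sub, trace_id]
  ring

lemma trace_comp_comp_comp_comm (a : M →ₗ[R] N) (b : N →ₗ[R] M) :
    trace R M ((b ∘ₗ a) ∘ₗ (b ∘ₗ a)) = trace R N ((a ∘ₗ b) ∘ₗ (a ∘ₗ b)) := by
  simpa only [comp_assoc] using trace_comp_comm' a (b ∘ₗ a ∘ₗ b)

lemma trace_id_sub_comp_sq_sub_trace_id_sub_comp_sq (a : M →ₗ[R] N) (b : N →ₗ[R] M) :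
    trace R M ((id - b ∘ₗ a) ∘ₗ (id - b ∘ₗ a)) - trace R N ((id - a ∘ₗ b) ∘ₗ (id - a ∘ₗ b))
      = finrank R M - finrank R N := by
  rw [trace_id_sub_comp_id_sub, trace_id_sub_comp_id_sub, trace_comp_comp_comp_comm,
    trace_comp_comm' a b]
  ring

end LinearMap

/-- If `a : V → W` and `b : W → V` are linear maps between finite-dimensional
vector spaces over a field `𝕜`, and `s₀ = id_V − b∘a`, `s₁ = id_W − a∘b`,
then `trace(s₀²) − trace(s₁²) = (dim ker a − dim coker a) · 1_𝕜`,
i.e. the difference of the traces of the squared remainders is the Fredholm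
index of `a`. -/
theorem trace_sq_remainders_eq_index
    {𝕜 V W : Type*} [Field 𝕜]
    [AddCommGroup V] [Module 𝕜 V] [FiniteDimensional 𝕜 V]
    [AddCommGroup W] [Module 𝕜 W] [FiniteDimensional 𝕜 W]
    (a : V →ₗ[𝕜] W) (b : W →ₗ[𝕜] V)
    (s₀ : V →ₗ[𝕜] V) (s₁ : W →ₗ[𝕜] W)
    (hs₀ : s₀ = LinearMap.id - b ∘ₗ a) (hs₁ : s₁ = LinearMap.id - a ∘ₗ b) :
    LinearMap.trace 𝕜 V (s₀ ∘ₗ s₀) - LinearMap.trace 𝕜 W (s₁ ∘ₗ s₁)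
      = ((Module.finrank 𝕜 (LinearMap.ker a) : ℤ)
          - (Module.finrank 𝕜 (W ⧸ LinearMap.range a) : ℤ)) • (1 : 𝕜) := by
  subst hs₀ hs₁
  rw [← LinearMap.index_eq_finrank_sub, LinearMap.index_eq_of_finiteDimensional,
    LinearMap.trace_id_sub_comp_sq_sub_trace_id_sub_comp_sq, zsmul_one]
  push_cast
  rfl
end

section
/- Let 𝕜 be a field, let V and W be finite-dimensional 𝕜-vector spaces, and let a : V → W and b : W → V be linear maps. Then for every integer n ≥ 1, trace((id_V − b∘a)^n) − trace((id_W − a∘b)^n) = (dim V − dim W) · 1_𝕜. -/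
/-!
Cyclicity of the trace gives `trace ((b ∘ a) ^ k) = trace ((a ∘ b) ^ k)` for every `k ≥ 1`, since
`(b ∘ a) ^ k = ((b ∘ a) ^ (k - 1) ∘ b) ∘ a` and `a ∘ (b ∘ a) ^ (k - 1) ∘ b = (a ∘ b) ^ k`. Hence for
any polynomial `p` the traces of `p (b ∘ a)` and `p (a ∘ b)` differ only through the constant
term `p 0 • id`, whose traces are `p 0 • dim`. Apply this to `p = (1 - X) ^ n`.
-/

open Polynomial Module

namespace LinearMap

variable {R M N : Type*} [CommRing R] [AddCommGroup M] [Module R M] [AddCommGroup N] [Module R N]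
  [Free R M] [Module.Finite R M] [Free R N] [Module.Finite R N]

theorem trace_comp_pow_comm (a : M →ₗ[R] N) (b : N →ₗ[R] M) {k : ℕ} (hk : k ≠ 0) :
    trace R M ((b ∘ₗ a) ^ k) = trace R N ((a ∘ₗ b) ^ k) := by
  obtain ⟨k, rfl⟩ := Nat.exists_eq_add_one_of_ne_zero hk
  have hb : ((b ∘ₗ a) ^ k) ∘ₗ b = b ∘ₗ ((a ∘ₗ b) ^ k) :=
    Module.End.commute_pow_left_of_commute (comp_assoc b a b) k
  rw [pow_succ, Module.End.mul_eq_comp, ← comp_assoc, trace_comp_comm', hb,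
    ← comp_assoc, pow_succ', Module.End.mul_eq_comp]

theorem trace_aeval_comp_sub_trace_aeval_comp (a : M →ₗ[R] N) (b : N →ₗ[R] M) (p : R[X]) :
    trace R M (aeval (b ∘ₗ a) p) - trace R N (aeval (a ∘ₗ b) p)
      = ((finrank R M : ℤ) - finrank R N) • p.coeff 0 := by
  induction p using Polynomial.induction_on' with
  | add p q hp hq =>
    simp only [map_add, coeff_add, smul_add, ← hp, ← hq]
    abel
  | monomial k c =>
    rcases eq_or_ne k 0 with rfl | hk
    · simp [Algebra.algebraMap_eq_smul_one, trace_one, sub_smul, mul_comm]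
    · simp [aeval_monomial, Algebra.algebraMap_eq_smul_one, trace_comp_pow_comm a b hk,
        coeff_monomial, hk]

end LinearMap

theorem trace_pow_remainders_eq_index_general
    {𝕜 V W : Type*} [Field 𝕜]
    [AddCommGroup V] [Module 𝕜 V] [FiniteDimensional 𝕜 V]
    [AddCommGroup W] [Module 𝕜 W] [FiniteDimensional 𝕜 W]
    (a : V →ₗ[𝕜] W) (b : W →ₗ[𝕜] V) (n : ℕ) :
    LinearMap.trace 𝕜 V (((1 : Module.End 𝕜 V) - b ∘ₗ a) ^ n)
      - LinearMap.trace 𝕜 W (((1 : Module.End 𝕜 W) - a ∘ₗ b) ^ n)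
      = ((Module.finrank 𝕜 V : ℤ) - (Module.finrank 𝕜 W : ℤ)) • (1 : 𝕜) := by
  have h := LinearMap.trace_aeval_comp_sub_trace_aeval_comp a b ((1 - X) ^ n)
  simpa [coeff_zero_eq_eval_zero] using h

/-- If `a : V → W` and `b : W → V` are linear maps between finite-dimensional
vector spaces over a field `𝕜`, then for every `n ≥ 1`,
`trace((id_V − b∘a)^n) − trace((id_W − a∘b)^n) = (dim V − dim W) · 1_𝕜`. -/
theorem trace_pow_remainders_eq_index
    {𝕜 V W : Type*} [Field 𝕜]
    [AddCommGroup V] [Module 𝕜 V] [FiniteDimensional 𝕜 V]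
    [AddCommGroup W] [Module 𝕜 W] [FiniteDimensional 𝕜 W]
    (a : V →ₗ[𝕜] W) (b : W →ₗ[𝕜] V) (n : ℕ) (hn : 1 ≤ n) :
    LinearMap.trace 𝕜 V (((1 : Module.End 𝕜 V) - b ∘ₗ a) ^ n)
      - LinearMap.trace 𝕜 W (((1 : Module.End 𝕜 W) - a ∘ₗ b) ^ n)
      = ((Module.finrank 𝕜 V : ℤ) - (Module.finrank 𝕜 W : ℤ)) • (1 : 𝕜) :=
  trace_pow_remainders_eq_index_general a b n
end
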